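/- arXiv:1903.08727 — 3 statements merged into one kernel-verified Lean document; each statement's English description precedes it below -/
import Mathlib

section
/- Let $t\in[0,\infty)$, $p\in(1,\infty)$, and let $x,\beta\colon[0,t]\to[0,\infty]$ be Borel-measurable functions which satisfy for all $s\in[0,t]$ that $(x_s)^p\le (x_0)^p + p\int_0^s (x_r)^{p-1}\beta_r\,dr < \infty$. Then $x_t \le x_0 + \int_0^t \beta_r\,dr$. -/
/-!
Write `Y s = x₀ ^ p + p ∫_(0,s] x ^ (p-1) β`. Since `x ≤ Y ^ (1/p)`, on `(s, s']` the function `Y`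
grows by at most `p Y(s') ^ ((p-1)/p) ∫_(s,s'] β`, which formally says `(Y ^ (1/p))' ≤ β`. To avoid
differentiating, replace `Y` by `Y + δ ^ p > 0`, which is continuous as the primitive of an
integrable function, and cut `[0, t]` into pieces so short that `Y ^ ((p-1)/p)` changes by a factor
at most `1 + ε` on each. On one piece the tangent-line inequality for the convex map `y ↦ y ^ p`
gives `Y(s') ^ (1/p) - Y(s) ^ (1/p) ≤ (1 + ε) ∫_(s,s'] β`; summing and letting `ε, δ → 0` yields
`Y(t) ^ (1/p) ≤ x₀ + ∫_(0,t] β`.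
-/

open MeasureTheory Set Filter Topology
open scoped ENNReal

theorem Real.sub_le_rpow_div_mul_of_rpow_le {p a b c : ℝ} (hp : 1 ≤ p) (ha : 0 < a) (hb : 0 < b)
    (h : a ^ p ≤ b ^ p + p * a ^ (p - 1) * c) : a - b ≤ (a / b) ^ (p - 1) * c := by
  have hp0 : 0 < p := zero_lt_one.trans_le hp
  have tangent : b ^ p + p * b ^ (p - 1) * (a - b) ≤ a ^ p := by
    have bernoulli := one_add_mul_self_le_rpow_one_add (s := a / b - 1)
      (by linarith [div_pos ha hb]) hp
    rw [add_sub_cancel, Real.div_rpow ha.le hb.le, le_div_iff₀ (Real.rpow_pos_of_pos hb p)]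
      at bernoulli
    calc b ^ p + p * b ^ (p - 1) * (a - b) = (1 + p * (a / b - 1)) * b ^ p := by
          rw [Real.rpow_sub hb, Real.rpow_one]; field_simp
      _ ≤ a ^ p := bernoulli
  have : p * (b ^ (p - 1) * (a - b)) ≤ p * (a ^ (p - 1) * c) := by linarith
  rw [Real.div_rpow ha.le hb.le, div_mul_eq_mul_div, le_div_iff₀ (Real.rpow_pos_of_pos hb _)]
  linarith [le_of_mul_le_mul_left this hp0]

theorem sub_le_sub_of_forall_increment_le {a b : ℝ} {u C : ℝ → ℝ} (hab : a ≤ b)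
    (h : ∀ ε > 0, ∃ η > 0, ∀ s ∈ Icc a b, ∀ s' ∈ Icc a b, s ≤ s' → s' - s < η →
      u s' - u s ≤ (1 + ε) * (C s' - C s)) :
    u b - u a ≤ C b - C a := by
  suffices key : ∀ ε > 0, u b - u a ≤ (1 + ε) * (C b - C a) by
    have hlim : Tendsto (fun ε : ℝ => (1 + ε) * (C b - C a)) (𝓝[>] 0) (𝓝 (C b - C a)) := by
      have : Continuous fun ε : ℝ => (1 + ε) * (C b - C a) := by fun_prop
      simpa using (this.tendsto 0).mono_left nhdsWithin_le_nhds
    exact ge_of_tendsto hlim (eventually_nhdsWithin_of_forall fun ε hε => key ε hε)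
  intro ε hε
  obtain ⟨η, hη, hinc⟩ := h ε hε
  obtain ⟨n, hn⟩ := exists_nat_gt ((b - a) / η)
  have hn0 : (0 : ℝ) < n := (div_nonneg (sub_nonneg.2 hab) hη.le).trans_lt hn
  set σ : ℕ → ℝ := fun i => a + i * ((b - a) / n) with hσ
  have hh : 0 ≤ (b - a) / n := div_nonneg (sub_nonneg.2 hab) hn0.le
  have hmesh : ∀ i, σ (i + 1) - σ i = (b - a) / n := fun i => by simp only [hσ]; push_cast; ring
  have hmem : ∀ i ≤ n, σ i ∈ Icc a b := fun i hi => by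
    have : (i : ℝ) * ((b - a) / n) ≤ n * ((b - a) / n) := by gcongr
    rw [mul_div_cancel₀ _ hn0.ne'] at this
    exact ⟨le_add_of_nonneg_right (mul_nonneg (Nat.cast_nonneg _) hh), by linarith⟩
  have hend : σ n = b := by simp only [hσ]; field_simp; ring
  have htelescope : ∀ f : ℝ → ℝ, ∑ i ∈ Finset.range n, (f (σ (i + 1)) - f (σ i)) = f b - f a :=
    fun f => (Finset.sum_range_sub (fun i => f (σ i)) n).trans (by rw [hend]; simp [hσ])
  calc u b - u a = ∑ i ∈ Finset.range n, (u (σ (i + 1)) - u (σ i)) := (htelescope u).symm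
    _ ≤ ∑ i ∈ Finset.range n, (1 + ε) * (C (σ (i + 1)) - C (σ i)) := by
        refine Finset.sum_le_sum fun i hi => hinc _ (hmem i (Finset.mem_range.1 hi).le) _
          (hmem (i + 1) (Finset.mem_range.1 hi)) (by linarith [hmesh i]) ?_
        rw [hmesh, div_lt_iff₀ hn0]
        rwa [div_lt_iff₀ hη, mul_comm] at hn
    _ = (1 + ε) * (C b - C a) := by rw [← Finset.mul_sum, htelescope]

theorem sub_le_sub_of_rpow_increment_le {p a b : ℝ} {g C : ℝ → ℝ} (hp : 1 ≤ p) (hab : a ≤ b)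
    (hg : ContinuousOn g (Icc a b)) (hg_pos : ∀ s ∈ Icc a b, 0 < g s)
    (hC : MonotoneOn C (Icc a b))
    (h : ∀ s ∈ Icc a b, ∀ s' ∈ Icc a b, s ≤ s' →
      g s' ^ p ≤ g s ^ p + p * g s' ^ (p - 1) * (C s' - C s)) :
    g b - g a ≤ C b - C a := by
  have hgq : ContinuousOn (fun s => g s ^ (p - 1)) (Icc a b) :=
    hg.rpow_const fun s hs => Or.inl (hg_pos s hs).ne'
  obtain ⟨s₀, hs₀, hmin⟩ := isCompact_Icc.exists_isMinOn (nonempty_Icc.2 hab) hgq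
  have hm : 0 < g s₀ ^ (p - 1) := Real.rpow_pos_of_pos (hg_pos s₀ hs₀) _
  have hunif := Metric.uniformContinuousOn_iff.1
    (isCompact_Icc.uniformContinuousOn_of_continuous hgq)
  refine sub_le_sub_of_forall_increment_le hab fun ε hε => ?_
  obtain ⟨η, hη, hclose⟩ := hunif (ε * g s₀ ^ (p - 1)) (mul_pos hε hm)
  refine ⟨η, hη, fun s hs s' hs' hss' hη' => ?_⟩
  have hratio : (g s' / g s) ^ (p - 1) ≤ 1 + ε := by
    have hdist : dist s' s < η := by rwa [Real.dist_eq, abs_of_nonneg (sub_nonneg.2 hss')]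
    have hclose' : g s' ^ (p - 1) - g s ^ (p - 1) < ε * g s₀ ^ (p - 1) :=
      (abs_lt.1 (hclose s' hs' s hs hdist)).2
    have hmin_s : g s₀ ^ (p - 1) ≤ g s ^ (p - 1) := hmin hs
    rw [Real.div_rpow (hg_pos s' hs').le (hg_pos s hs).le,
      div_le_iff₀ (Real.rpow_pos_of_pos (hg_pos s hs) _)]
    nlinarith
  calc g s' - g s ≤ (g s' / g s) ^ (p - 1) * (C s' - C s) :=
        Real.sub_le_rpow_div_mul_of_rpow_le hp (hg_pos s' hs') (hg_pos s hs) (h s hs s' hs' hss')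
    _ ≤ (1 + ε) * (C s' - C s) :=
        mul_le_mul_of_nonneg_right hratio (sub_nonneg.2 (hC hs hs' hss'))

theorem rpow_inv_le_add_of_increment_le {p a b : ℝ} {Φ C : ℝ → ℝ} (hp : 1 ≤ p) (hab : a ≤ b)
    (hΦ : ContinuousOn Φ (Icc a b)) (hΦ_nonneg : ∀ s ∈ Icc a b, 0 ≤ Φ s)
    (hC : MonotoneOn C (Icc a b))
    (h : ∀ s ∈ Icc a b, ∀ s' ∈ Icc a b, s ≤ s' →
      Φ s' ≤ Φ s + p * (Φ s' ^ p⁻¹) ^ (p - 1) * (C s' - C s)) :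
    Φ b ^ p⁻¹ ≤ Φ a ^ p⁻¹ + (C b - C a) := by
  have hp0 : 0 < p := zero_lt_one.trans_le hp
  refine le_of_forall_pos_le_add fun δ hδ => ?_
  set g : ℝ → ℝ := fun s => (δ ^ p + Φ s) ^ p⁻¹ with hg
  have hg_pos : ∀ s ∈ Icc a b, 0 < g s := fun s hs => by
    have := hΦ_nonneg s hs; positivity
  have hg_pow : ∀ s ∈ Icc a b, g s ^ p = δ ^ p + Φ s := fun s hs =>
    Real.rpow_inv_rpow (by have := hΦ_nonneg s hs; positivity) hp0.ne'
  have hΦ_le_g : ∀ s ∈ Icc a b, Φ s ^ p⁻¹ ≤ g s := fun s hs => by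
    have := hΦ_nonneg s hs
    exact Real.rpow_le_rpow this (by linarith [Real.rpow_nonneg hδ.le p]) (by positivity)
  have hg_cont : ContinuousOn g (Icc a b) :=
    (continuousOn_const.add hΦ).rpow_const fun _ _ => Or.inr (inv_nonneg.2 hp0.le)
  have key := sub_le_sub_of_rpow_increment_le hp hab hg_cont hg_pos hC fun s hs s' hs' hss' => by
    rw [hg_pow s hs, hg_pow s' hs']
    have := mul_le_mul_of_nonneg_right
      (Real.rpow_le_rpow (Real.rpow_nonneg (hΦ_nonneg s' hs') _) (hΦ_le_g s' hs')
        (by linarith : 0 ≤ p - 1)) (sub_nonneg.2 (hC hs hs' hss'))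
    linarith [h s hs s' hs' hss', mul_le_mul_of_nonneg_left this hp0.le]
  have hga : g a ≤ δ + Φ a ^ p⁻¹ := by
    have := Real.rpow_add_le_add_rpow (Real.rpow_nonneg hδ.le p) (hΦ_nonneg a (left_mem_Icc.2 hab))
      (by positivity : 0 ≤ p⁻¹) (inv_le_one_of_one_le₀ hp)
    rwa [Real.rpow_rpow_inv hδ.le hp0.ne'] at this
  linarith [hΦ_le_g b (right_mem_Icc.2 hab)]

theorem setLIntegral_rpow_mul_le {α : Type*} [MeasurableSpace α] {μ : Measure α}
    {x β : α → ℝ≥0∞} {S : Set α} {q : ℝ} {M : ℝ≥0∞} (hβ : Measurable β) (hq : 0 ≤ q)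
    (hM : ∀ r ∈ S, x r ≤ M) :
    ∫⁻ r in S, x r ^ q * β r ∂μ ≤ M ^ q * ∫⁻ r in S, β r ∂μ := by
  rw [← lintegral_const_mul _ hβ]
  exact setLIntegral_mono (hβ.const_mul _) fun r hr => by gcongr; exact hM r hr


theorem continuousOn_toReal_setLIntegral_Ioc {μ : Measure ℝ} [NullSingletonClass μ]
    {f : ℝ → ℝ≥0∞} {a b : ℝ} (hf : AEMeasurable f (μ.restrict (Ioc a b)))
    (hf_fin : ∫⁻ r in Ioc a b, f r ∂μ ≠ ∞) :
    ContinuousOn (fun s => (∫⁻ r in Ioc a s, f r ∂μ).toReal) (Icc a b) := by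
  have hint : IntegrableOn (fun r => (f r).toReal) (Icc a b) μ :=
    (integrableOn_Icc_iff_integrableOn_Ioc enorm_ne_top).2
      (integrable_toReal_of_lintegral_ne_top hf hf_fin)
  refine (intervalIntegral.continuousOn_primitive hint).congr fun s hs => ?_
  have hsub : Ioc a s ⊆ Ioc a b := Ioc_subset_Ioc_right hs.2
  exact (integral_toReal (hf.mono_set hsub)
    (ae_restrict_of_ae_restrict_of_subset hsub (ae_lt_top' hf hf_fin))).symm

theorem setLIntegral_Ioc_add {μ : Measure ℝ} (f : ℝ → ℝ≥0∞) {a s s' : ℝ} (has : a ≤ s)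
    (hss' : s ≤ s') :
    ∫⁻ r in Ioc a s', f r ∂μ = ∫⁻ r in Ioc a s, f r ∂μ + ∫⁻ r in Ioc s s', f r ∂μ := by
  rw [← Ioc_union_Ioc_eq_Ioc has hss',
    lintegral_union measurableSet_Ioc (Ioc_disjoint_Ioc_of_le le_rfl)]

theorem rpow_inv_le_add_setLIntegral_of_increment_le {μ : Measure ℝ} {p a b : ℝ}
    {Y β : ℝ → ℝ≥0∞} (hp : 1 ≤ p) (hab : a ≤ b)
    (hY : ContinuousOn (fun s => (Y s).toReal) (Icc a b)) (hY_fin : ∀ s ∈ Icc a b, Y s ≠ ∞)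
    (h : ∀ s ∈ Icc a b, ∀ s' ∈ Icc a b, s ≤ s' →
      Y s' ≤ Y s + ENNReal.ofReal p * ((Y s' ^ p⁻¹) ^ (p - 1) * ∫⁻ r in Ioc s s', β r ∂μ)) :
    Y b ^ p⁻¹ ≤ Y a ^ p⁻¹ + ∫⁻ r in Ioc a b, β r ∂μ := by
  have hp0 : 0 < p := zero_lt_one.trans_le hp
  rcases eq_or_ne (∫⁻ r in Ioc a b, β r ∂μ) ∞ with hβ_top | hβ_fin
  · simp [hβ_top]
  have hβ_fin' : ∀ s ∈ Icc a b, ∀ s' ∈ Icc a b, ∫⁻ r in Ioc s s', β r ∂μ ≠ ∞ :=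
    fun s hs s' hs' => ne_top_of_le_ne_top hβ_fin (lintegral_mono_set (Ioc_subset_Ioc hs.1 hs'.2))
  set C : ℝ → ℝ := fun s => (∫⁻ r in Ioc a s, β r ∂μ).toReal with hC_def
  have hC_sub : ∀ s ∈ Icc a b, ∀ s' ∈ Icc a b, s ≤ s' →
      C s' - C s = (∫⁻ r in Ioc s s', β r ∂μ).toReal := fun s hs s' hs' hss' => by
    simp only [hC_def]
    rw [setLIntegral_Ioc_add _ hs.1 hss',
      ENNReal.toReal_add (hβ_fin' a (left_mem_Icc.2 hab) s hs) (hβ_fin' s hs s' hs')]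
    ring
  have hC : MonotoneOn C (Icc a b) := fun s hs s' hs' hss' =>
    sub_nonneg.1 (hC_sub s hs s' hs' hss' ▸ ENNReal.toReal_nonneg)
  have key := rpow_inv_le_add_of_increment_le hp hab hY (fun _ _ => ENNReal.toReal_nonneg) hC
    fun s hs s' hs' hss' => by
      have hYs := hY_fin s hs
      have hYs' := hY_fin s' hs'
      have hβs := hβ_fin' s hs s' hs'
      have := ENNReal.toReal_mono (by finiteness) (h s hs s' hs' hss')
      rwa [ENNReal.toReal_add hYs (by finiteness), ENNReal.toReal_mul,
        ENNReal.toReal_mul, ENNReal.toReal_ofReal hp0.le, ← ENNReal.toReal_rpow,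
        ← ENNReal.toReal_rpow, ← hC_sub s hs s' hs' hss', ← mul_assoc] at this
  have hYa := hY_fin a (left_mem_Icc.2 hab)
  have hYb := hY_fin b (right_mem_Icc.2 hab)
  rw [← ENNReal.toReal_le_toReal (by finiteness) (by finiteness),
    ENNReal.toReal_add (by finiteness) hβ_fin, ← ENNReal.toReal_rpow, ← ENNReal.toReal_rpow]
  simpa [hC_def] using key

noncomputable def opialRHS (x β : ℝ → ℝ≥0∞) (p s : ℝ) : ℝ≥0∞ :=
  x 0 ^ p + ENNReal.ofReal p * ∫⁻ r in Ioc 0 s, x r ^ (p - 1) * β r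

section opialRHS

variable {x β : ℝ → ℝ≥0∞} {p : ℝ}

theorem opialRHS_mono : Monotone (opialRHS x β p) := fun s s' hss' => by
  unfold opialRHS
  gcongr

theorem continuousOn_toReal_opialRHS (hp : 0 < p) (hx : Measurable x) (hβ : Measurable β)
    {t : ℝ} (ht : opialRHS x β p t ≠ ∞) :
    ContinuousOn (fun s => (opialRHS x β p s).toReal) (Icc 0 t) := by
  have hI_fin : ∫⁻ r in Ioc 0 t, x r ^ (p - 1) * β r ≠ ∞ := fun hI =>
    ht (by simp [opialRHS, hI, hp])
  have hcont : ContinuousOn (fun s => (x 0 ^ p).toReal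
      + p * (∫⁻ r in Ioc 0 s, x r ^ (p - 1) * β r).toReal) (Icc 0 t) :=
    continuousOn_const.add (continuousOn_const.mul
      (continuousOn_toReal_setLIntegral_Ioc (by fun_prop) hI_fin))
  refine hcont.congr fun s hs => ?_
  obtain ⟨hx0_fin, hIs_fin⟩ := ENNReal.add_ne_top.1 (ne_top_of_le_ne_top ht (opialRHS_mono hs.2))
  rw [opialRHS, ENNReal.toReal_add hx0_fin hIs_fin, ENNReal.toReal_mul,
    ENNReal.toReal_ofReal hp.le]

theorem opialRHS_le_add (hp : 1 ≤ p) (hβ : Measurable β) {s s' : ℝ} (hs : 0 ≤ s)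
    (hss' : s ≤ s') (hx : ∀ r ∈ Ioc s s', x r ^ p ≤ opialRHS x β p r) :
    opialRHS x β p s' ≤ opialRHS x β p s
      + ENNReal.ofReal p * ((opialRHS x β p s' ^ p⁻¹) ^ (p - 1) * ∫⁻ r in Ioc s s', β r) := by
  have hx_le : ∀ r ∈ Ioc s s', x r ≤ opialRHS x β p s' ^ p⁻¹ := fun r hr =>
    (ENNReal.le_rpow_inv_iff (by linarith)).2 ((hx r hr).trans (opialRHS_mono hr.2))
  calc opialRHS x β p s'
      = opialRHS x β p s + ENNReal.ofReal p * ∫⁻ r in Ioc s s', x r ^ (p - 1) * β r := by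
        rw [opialRHS, opialRHS, setLIntegral_Ioc_add _ hs hss', mul_add, add_assoc]
    _ ≤ _ := by gcongr; exact setLIntegral_rpow_mul_le hβ (by linarith) hx_le

end opialRHS

/-- Nonlinear Gronwall-Bellman-Opial inequality (Lemma 2.2). -/
theorem stmt0 (t p : ℝ) (ht : 0 ≤ t) (hp : 1 < p)
    (x β : ℝ → ℝ≥0∞) (hx : Measurable x) (hβ : Measurable β)
    (h : ∀ s ∈ Set.Icc (0:ℝ) t,
      x s ^ p ≤ x 0 ^ p + ENNReal.ofReal p * ∫⁻ r in Set.Ioc (0:ℝ) s, x r ^ (p - 1) * β r ∧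
        x 0 ^ p + ENNReal.ofReal p * ∫⁻ r in Set.Ioc (0:ℝ) s, x r ^ (p - 1) * β r < ⊤) :
    x t ≤ x 0 + ∫⁻ r in Set.Ioc (0:ℝ) t, β r := by
  have hp0 : 0 < p := zero_lt_one.trans hp
  have hY_fin : ∀ s ∈ Icc 0 t, opialRHS x β p s ≠ ∞ := fun s hs => (h s hs).2.ne
  have key := rpow_inv_le_add_setLIntegral_of_increment_le hp.le ht
    (continuousOn_toReal_opialRHS hp0 hx hβ (hY_fin t ⟨ht, le_rfl⟩)) hY_fin
    fun s hs s' hs' hss' => opialRHS_le_add hp.le hβ hs.1 hss'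
      fun r hr => (h r ⟨hs.1.trans hr.1.le, hr.2.trans hs'.2⟩).1
  calc x t = (x t ^ p) ^ p⁻¹ := (ENNReal.rpow_rpow_inv hp0.ne' _).symm
    _ ≤ opialRHS x β p t ^ p⁻¹ := ENNReal.rpow_le_rpow (h t ⟨ht, le_rfl⟩).1 (by positivity)
    _ ≤ opialRHS x β p 0 ^ p⁻¹ + ∫⁻ r in Ioc 0 t, β r := key
    _ = x 0 + ∫⁻ r in Ioc 0 t, β r := by
        simp [opialRHS, ENNReal.rpow_rpow_inv hp0.ne']
end

section
/- Let $H$ be a real inner product space, let $u,m_1,m_2\in H$ with $u\ne0$, let $U$ be a separable real Hilbert space, let $s_1,s_2\in\mathrm{HS}(U,H)$, let $p\in[2,\infty)$, $\varepsilon,\delta\in(0,\infty)$. Then $\langle u, m_1+m_2\rangle + \tfrac12\|s_1+s_2\|_{\mathrm{HS}}^2 + \tfrac{p-2}{2}\tfrac{\|\langle u,s_1+s_2\rangle\|_{\mathrm{HS}(U,\R)}^2}{\|u\|^2} \le \langle u,m_1\rangle + \tfrac{1+\varepsilon}{2}\|s_1\|_{\mathrm{HS}}^2 + \tfrac{(p-2)(1+\varepsilon)}{2}\tfrac{\|\langle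 u,s_1\rangle\|_{\mathrm{HS}(U,\R)}^2}{\|u\|^2} + \tfrac{\|u\|^2}{4\delta} + \delta\|m_2\|^2 + \tfrac{p-1}{2}\big(1+\tfrac1{\varepsilon}\big)\|s_2\|_{\mathrm{HS}}^2$. -/
open scoped RealInnerProductSpace

/-- The key deterministic inequality in the proof of the perturbation estimate
(Corollary 3.8): Cauchy-Schwarz and Young estimates for the cross terms. -/
theorem stmt13 {H 𝕌 : Type*}
    [NormedAddCommGroup H] [InnerProductSpace ℝ H]
    [NormedAddCommGroup 𝕌] [InnerProductSpace ℝ 𝕌] [CompleteSpace 𝕌]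
    [TopologicalSpace.SeparableSpace 𝕌]
    {ι : Type*} (e : HilbertBasis ι ℝ 𝕌)
    (u m₁ m₂ : H) (hu : u ≠ 0)
    (s₁ s₂ : 𝕌 →L[ℝ] H)
    (hs₁ : Summable fun i => ‖s₁ (e i)‖ ^ 2)
    (hs₂ : Summable fun i => ‖s₂ (e i)‖ ^ 2)
    (p ε δ : ℝ) (hp : 2 ≤ p) (hε : 0 < ε) (hδ : 0 < δ) :
    ⟪u, m₁ + m₂⟫ + (1 / 2) * ∑' i, ‖(s₁ + s₂) (e i)‖ ^ 2
        + (p - 2) / 2 * (∑' i, ⟪u, (s₁ + s₂) (e i)⟫ ^ 2) / ‖u‖ ^ 2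
      ≤ ⟪u, m₁⟫ + (1 + ε) / 2 * ∑' i, ‖s₁ (e i)‖ ^ 2
        + (p - 2) * (1 + ε) / 2 * (∑' i, ⟪u, s₁ (e i)⟫ ^ 2) / ‖u‖ ^ 2
        + ‖u‖ ^ 2 / (4 * δ) + δ * ‖m₂‖ ^ 2
        + (p - 1) / 2 * (1 + 1 / ε) * ∑' i, ‖s₂ (e i)‖ ^ 2 := by
  have hN : (0:ℝ) < ‖u‖ ^ 2 := pow_pos (norm_pos_iff.mpr hu) 2
  have young : ∀ a b : ℝ, (a + b) ^ 2 ≤ (1 + ε) * a ^ 2 + (1 + 1/ε) * b ^ 2 := by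
    intro a b
    have h2 : 2 * (a * b) - ε * a ^ 2 ≤ b ^ 2 / ε := by
      rw [le_div_iff₀ hε]; nlinarith [sq_nonneg (b - ε * a)]
    have h3 : (1 + 1/ε) * b ^ 2 = b ^ 2 + b ^ 2 / ε := by ring
    nlinarith [h2, h3]
  have hεe : ε * (1/ε) = 1 := mul_one_div_cancel hε.ne'
  -- pointwise Young bound on norms
  have hpt : ∀ i, ‖(s₁ + s₂) (e i)‖ ^ 2 ≤
      (1 + ε) * ‖s₁ (e i)‖ ^ 2 + (1 + 1/ε) * ‖s₂ (e i)‖ ^ 2 := by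
    intro i
    have h1 : ‖(s₁ + s₂) (e i)‖ ≤ ‖s₁ (e i)‖ + ‖s₂ (e i)‖ := by
      simp only [ContinuousLinearMap.add_apply]; exact norm_add_le _ _
    calc ‖(s₁ + s₂) (e i)‖ ^ 2 ≤ (‖s₁ (e i)‖ + ‖s₂ (e i)‖) ^ 2 :=
          pow_le_pow_left₀ (norm_nonneg _) h1 2
      _ ≤ _ := young _ _
  have hsum12 : Summable fun i => ‖(s₁ + s₂) (e i)‖ ^ 2 := by
    apply Summable.of_nonneg_of_le (fun i => by positivity) hpt
      ((hs₁.mul_left _).add (hs₂.mul_left _))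
  -- inner product squared bounds
  have hib : ∀ (s : 𝕌 →L[ℝ] H) i, ⟪u, s (e i)⟫ ^ 2 ≤ ‖u‖ ^ 2 * ‖s (e i)‖ ^ 2 := by
    intro s i
    calc ⟪u, s (e i)⟫ ^ 2 = |⟪u, s (e i)⟫| ^ 2 := (sq_abs _).symm
      _ ≤ (‖u‖ * ‖s (e i)‖) ^ 2 := by
          apply pow_le_pow_left₀ (abs_nonneg _) (abs_real_inner_le_norm _ _)
      _ = ‖u‖ ^ 2 * ‖s (e i)‖ ^ 2 := by ring
  have hb1 : Summable fun i => ⟪u, s₁ (e i)⟫ ^ 2 :=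
    Summable.of_nonneg_of_le (fun i => sq_nonneg _) (hib s₁) (hs₁.mul_left _)
  have hb2 : Summable fun i => ⟪u, s₂ (e i)⟫ ^ 2 :=
    Summable.of_nonneg_of_le (fun i => sq_nonneg _) (hib s₂) (hs₂.mul_left _)
  have hb12 : Summable fun i => ⟪u, (s₁ + s₂) (e i)⟫ ^ 2 :=
    Summable.of_nonneg_of_le (fun i => sq_nonneg _) (hib (s₁ + s₂)) (hsum12.mul_left _)
  -- key1 : tsum norm bound
  have key1 : ∑' i, ‖(s₁ + s₂) (e i)‖ ^ 2 ≤
      (1 + ε) * ∑' i, ‖s₁ (e i)‖ ^ 2 + (1 + 1/ε) * ∑' i, ‖s₂ (e i)‖ ^ 2 := by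
    rw [← tsum_mul_left, ← tsum_mul_left, ← Summable.tsum_add (hs₁.mul_left _) (hs₂.mul_left _)]
    exact Summable.tsum_le_tsum hpt hsum12 ((hs₁.mul_left _).add (hs₂.mul_left _))
  -- key2 : tsum inner bound
  have key2 : ∑' i, ⟪u, (s₁ + s₂) (e i)⟫ ^ 2 ≤
      (1 + ε) * ∑' i, ⟪u, s₁ (e i)⟫ ^ 2 + (1 + 1/ε) * ∑' i, ⟪u, s₂ (e i)⟫ ^ 2 := by
    rw [← tsum_mul_left, ← tsum_mul_left, ← Summable.tsum_add (hb1.mul_left _) (hb2.mul_left _)]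
    refine Summable.tsum_le_tsum (fun i => ?_) hb12 ((hb1.mul_left _).add (hb2.mul_left _))
    have h1 : ⟪u, (s₁ + s₂) (e i)⟫ = ⟪u, s₁ (e i)⟫ + ⟪u, s₂ (e i)⟫ := by
      simp [ContinuousLinearMap.add_apply, inner_add_right]
    rw [h1]
    exact young _ _
  -- key3 : B₂ ≤ N * A₂
  have key3 : ∑' i, ⟪u, s₂ (e i)⟫ ^ 2 ≤ ‖u‖ ^ 2 * ∑' i, ‖s₂ (e i)‖ ^ 2 := by
    rw [← tsum_mul_left]
    exact Summable.tsum_le_tsum (hib s₂) hb2 (hs₂.mul_left _)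
  -- key4 : Young for ⟪u, m₂⟫
  have key4 : ⟪u, m₂⟫ ≤ ‖u‖ ^ 2 / (4 * δ) + δ * ‖m₂‖ ^ 2 := by
    rw [div_add' _ _ _ (by positivity : (4:ℝ) * δ ≠ 0), le_div_iff₀ (by positivity)]
    nlinarith [real_inner_le_norm u m₂, sq_nonneg (‖u‖ - 2 * δ * ‖m₂‖), hδ]
  have hmadd : ⟪u, m₁ + m₂⟫ = ⟪u, m₁⟫ + ⟪u, m₂⟫ := inner_add_right _ _ _
  set A₁ := ∑' i, ‖s₁ (e i)‖ ^ 2 with hA1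
  set A₂ := ∑' i, ‖s₂ (e i)‖ ^ 2 with hA2
  set B₁ := ∑' i, ⟪u, s₁ (e i)⟫ ^ 2 with hB1
  set B₂ := ∑' i, ⟪u, s₂ (e i)⟫ ^ 2 with hB2
  have hA2n : 0 ≤ A₂ := tsum_nonneg (fun i => by positivity)
  have hB1n : 0 ≤ B₁ := tsum_nonneg (fun i => sq_nonneg _)
  have hB2n : 0 ≤ B₂ := tsum_nonneg (fun i => sq_nonneg _)
  -- bound the inner-product tsum term
  have key5 : (p - 2) / 2 * (∑' i, ⟪u, (s₁ + s₂) (e i)⟫ ^ 2) / ‖u‖ ^ 2 ≤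
      (p - 2) * (1 + ε) / 2 * B₁ / ‖u‖ ^ 2 + (p - 2) / 2 * (1 + 1/ε) * A₂ := by
    have h1 : (p - 2) / 2 * (∑' i, ⟪u, (s₁ + s₂) (e i)⟫ ^ 2) / ‖u‖ ^ 2 ≤
        (p - 2) / 2 * ((1 + ε) * B₁ + (1 + 1/ε) * B₂) / ‖u‖ ^ 2 := by
      exact (div_le_div_iff_of_pos_right hN).mpr (mul_le_mul_of_nonneg_left key2 (by linarith))
    refine h1.trans ?_
    have h2 : (p - 2) / 2 * ((1 + 1/ε) * B₂) / ‖u‖ ^ 2 ≤ (p - 2) / 2 * (1 + 1/ε) * A₂ := by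
      rw [div_le_iff₀ hN]
      have hc : 0 ≤ (p - 2) / 2 * (1 + 1/ε) := mul_nonneg (by linarith) (by positivity)
      calc (p - 2) / 2 * ((1 + 1/ε) * B₂) = (p - 2) / 2 * (1 + 1/ε) * B₂ := by ring
        _ ≤ (p - 2) / 2 * (1 + 1/ε) * (‖u‖ ^ 2 * A₂) := by
            exact mul_le_mul_of_nonneg_left key3 hc
        _ = (p - 2) / 2 * (1 + 1/ε) * A₂ * ‖u‖ ^ 2 := by ring
    have h3 : (p - 2) / 2 * ((1 + ε) * B₁ + (1 + 1/ε) * B₂) / ‖u‖ ^ 2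
        = (p - 2) * (1 + ε) / 2 * B₁ / ‖u‖ ^ 2 + (p - 2) / 2 * ((1 + 1/ε) * B₂) / ‖u‖ ^ 2 := by
      ring
    rw [h3]
    linarith
  rw [hmadd]
  have key1' : (1/2 : ℝ) * ∑' i, ‖(s₁ + s₂) (e i)‖ ^ 2 ≤
      (1 + ε) / 2 * A₁ + (1 + 1/ε) / 2 * A₂ := by linarith
  have hfin : (p - 2) / 2 * (1 + 1/ε) * A₂ + (1 + 1/ε) / 2 * A₂
      = (p - 1) / 2 * (1 + 1/ε) * A₂ := by ring
  nlinarith [key5, key1', key4, hfin]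
end

section
/- Let $p\in(1,\infty)$, $\varepsilon\in(0,\infty)$, $t\in[0,\infty)$, and let $x,\beta\colon[0,t]\to[0,\infty]$ be Borel measurable with $(x_s)^p\le(x_0)^p+p\int_0^s(x_r)^{p-1}\beta_r\,dr<\infty$ for all $s\in[0,t]$. Then $\big(\varepsilon+(x_0)^p+p\int_0^t(x_r)^{p-1}\beta_r\,dr\big)^{1/p} \le (\varepsilon+(x_0)^p)^{1/p}+\int_0^t\beta_s\,ds$. -/
/-!
Put `G s = ε + x₀ᵖ + p ∫₀ˢ x^(p-1) β`. As an indefinite integral, `G` is absolutely continuous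
with `G' = p x^(p-1) β` a.e., so the fundamental theorem of calculus for absolutely continuous
functions, applied to `G^(1/p)`, gives `G(t)^(1/p) - G(0)^(1/p) = ∫₀ᵗ G^(1/p-1) x^(p-1) β`.
The hypothesis `xₛᵖ ≤ G(s)` bounds `x^(p-1)` by `G^(1-1/p)`, so the integrand is at most `β`.
-/

open MeasureTheory Set
open scoped ENNReal NNReal Interval

theorem LipschitzOnWith.comp_absolutelyContinuousOnInterval {X Y : Type*}
    [PseudoMetricSpace X] [PseudoMetricSpace Y] {g : X → Y} {K : ℝ≥0} {s : Set X}
    {f : ℝ → X} {a b : ℝ} (hg : LipschitzOnWith K g s)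
    (hf : AbsolutelyContinuousOnInterval f a b) (hfs : MapsTo f [[a, b]] s) :
    AbsolutelyContinuousOnInterval (g ∘ f) a b := by
  rw [absolutelyContinuousOnInterval_iff] at hf ⊢
  intro ε hε
  obtain ⟨δ, hδ, hfδ⟩ := hf (ε / (K + 1)) (by positivity)
  refine ⟨δ, hδ, fun E hE hEδ => ?_⟩
  have hE' := hE
  simp only [AbsolutelyContinuousOnInterval.disjWithin, mem_ofPred_eq] at hE'
  calc ∑ i ∈ Finset.range E.1, dist ((g ∘ f) (E.2 i).1) ((g ∘ f) (E.2 i).2)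
      ≤ ∑ i ∈ Finset.range E.1, K * dist (f (E.2 i).1) (f (E.2 i).2) := by
        gcongr with i hi
        exact hg.dist_le_mul _ (hfs (hE'.1 i hi).1) _ (hfs (hE'.1 i hi).2)
    _ = K * ∑ i ∈ Finset.range E.1, dist (f (E.2 i).1) (f (E.2 i).2) :=
        (Finset.mul_sum ..).symm
    _ ≤ K * (ε / (K + 1)) := by gcongr; exact (hfδ E hE hEδ).le
    _ < (K + 1) * (ε / (K + 1)) := by gcongr; linarith
    _ = ε := by field_simp

theorem ContDiffOn.comp_absolutelyContinuousOnInterval {E : Type*} [NormedAddCommGroup E]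
    [NormedSpace ℝ E] {φ : ℝ → E} {U : Set ℝ} {G : ℝ → ℝ} {a b : ℝ}
    (hφ : ContDiffOn ℝ 1 φ U) (hG : AbsolutelyContinuousOnInterval G a b)
    (hGU : MapsTo G [[a, b]] U) : AbsolutelyContinuousOnInterval (φ ∘ G) a b := by
  have himage := hG.continuousOn.image_uIcc
  obtain ⟨K, hK⟩ := (hφ.mono (himage ▸ hGU.image_subset)).exists_lipschitzOnWith one_ne_zero
    (convex_uIcc _ _) isCompact_uIcc
  exact hK.comp_absolutelyContinuousOnInterval hG (himage ▸ mapsTo_image G [[a, b]])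

theorem AbsolutelyContinuousOnInterval.integral_deriv_comp_mul_deriv {φ G : ℝ → ℝ}
    {U : Set ℝ} {a b : ℝ} (hU : IsOpen U) (hφ : ContDiffOn ℝ 1 φ U)
    (hG : AbsolutelyContinuousOnInterval G a b) (hGU : MapsTo G [[a, b]] U) :
    ∫ s in a..b, deriv φ (G s) * deriv G s = φ (G b) - φ (G a) := by
  refine ((intervalIntegral.integral_congr_ae ?_).trans
    (hφ.comp_absolutelyContinuousOnInterval hG hGU).integral_deriv_eq_sub)
  filter_upwards [hG.ae_differentiableAt] with s hs hsab
  have hsab' := uIoc_subset_uIcc hsab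
  have hφs : DifferentiableAt ℝ φ (G s) :=
    (hφ.differentiableOn one_ne_zero).differentiableAt (hU.mem_nhds (hGU hsab'))
  exact (deriv_comp s hφs (hs hsab')).symm

theorem rpow_add_setLIntegral_Ioc_le {g : ℝ → ℝ≥0∞} {a b c q : ℝ} (hab : a ≤ b) (hc : 0 < c)
    (hq : 0 ≤ q) (hg : AEMeasurable g (volume.restrict (Ioc a b)))
    (hfin : ∫⁻ r in Ioc a b, g r ≠ ⊤) :
    (ENNReal.ofReal c + ∫⁻ r in Ioc a b, g r) ^ q ≤ ENNReal.ofReal c ^ q + ∫⁻ s in Ioc a b,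
      ENNReal.ofReal (q * (c + (∫⁻ r in Ioc a s, g r).toReal) ^ (q - 1)) * g s := by
  have hF : ∀ s ∈ [[a, b]], ∫ r in a..s, (g r).toReal = (∫⁻ r in Ioc a s, g r).toReal := by
    intro s hs
    rw [uIcc_of_le hab] at hs
    have hgs := hg.mono_set (Ioc_subset_Ioc_right hs.2)
    have hfins := ne_top_of_le_ne_top hfin (lintegral_mono_set (Ioc_subset_Ioc_right hs.2))
    rw [intervalIntegral.integral_of_le hs.1, integral_toReal hgs (ae_lt_top' hgs hfins)]
  have hgi : IntervalIntegrable (fun r => (g r).toReal) volume a b :=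
    (intervalIntegrable_iff_integrableOn_Ioc_of_le hab).2
      (integrable_toReal_of_lintegral_ne_top hg hfin)
  set G : ℝ → ℝ := fun s => c + ∫ r in a..s, (g r).toReal with hG
  have hGac : AbsolutelyContinuousOnInterval G a b :=
    contDiffOn_const.absolutelyContinuousOnInterval.add
      (hgi.absolutelyContinuousOnInterval_intervalIntegral left_mem_uIcc)
  have hGpos : MapsTo G [[a, b]] (Ioi 0) := by
    intro s hs
    simp only [hG, hF s hs, mem_Ioi]
    positivity
  have hGa : G a = c := by simp [hG]
  have hGb : ENNReal.ofReal (G b) = ENNReal.ofReal c + ∫⁻ r in Ioc a b, g r := by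
    rw [show G b = c + _ from rfl, hF b right_mem_uIcc,
      ENNReal.ofReal_add hc.le ENNReal.toReal_nonneg, ENNReal.ofReal_toReal hfin]
  have hFTC := hGac.integral_deriv_comp_mul_deriv isOpen_Ioi
    (fun y hy => (Real.contDiffAt_rpow_const_of_ne (p := q) (ne_of_gt hy)).contDiffWithinAt)
    hGpos
  have hderiv : ∀ᵐ s, s ∈ Ioc a b → deriv G s = (g s).toReal := by
    filter_upwards [hgi.ae_hasDerivAt_integral] with s hs hsab
    exact ((hs (uIoc_subset_uIcc (uIoc_of_le hab ▸ hsab)) a left_mem_uIcc).const_add c).deriv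
  calc (ENNReal.ofReal c + ∫⁻ r in Ioc a b, g r) ^ q
      = ENNReal.ofReal (c ^ q + ∫ s in a..b, deriv (fun y => y ^ q) (G s) * deriv G s) := by
        rw [hFTC, ← hGb, ENNReal.ofReal_rpow_of_pos (hGpos right_mem_uIcc), hGa]; ring_nf
    _ ≤ ENNReal.ofReal c ^ q
          + ‖∫ s in Ioc a b, deriv (fun y => y ^ q) (G s) * deriv G s‖ₑ := by
        rw [ENNReal.ofReal_rpow_of_pos hc, ← intervalIntegral.integral_of_le hab,
          Real.enorm_eq_ofReal_abs]
        grw [ENNReal.ofReal_add_le, ← le_abs_self]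
    _ ≤ ENNReal.ofReal c ^ q
          + ∫⁻ s in Ioc a b, ‖deriv (fun y => y ^ q) (G s) * deriv G s‖ₑ := by
        gcongr; exact enorm_integral_le_lintegral_enorm _
    _ ≤ _ := by
        refine add_le_add le_rfl
          (lintegral_mono_ae ((ae_restrict_iff' measurableSet_Ioc).2 ?_))
        filter_upwards [hderiv] with s hs hsab
        have hsab' := uIoc_subset_uIcc (uIoc_of_le hab ▸ hsab)
        rw [hs hsab, Real.deriv_rpow_const, enorm_mul,
          Real.enorm_of_nonneg (mul_nonneg hq (Real.rpow_nonneg (hGpos hsab').out.le _)),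
          Real.enorm_of_nonneg ENNReal.toReal_nonneg]
        simp only [hG, hF s hsab']
        gcongr
        exact ENNReal.ofReal_toReal_le

theorem ENNReal.ofReal_rpow_inv_sub_one_mul_rpow_sub_one_le_one {X : ℝ≥0∞} {y p : ℝ}
    (hp : 1 ≤ p) (hy : 0 < y) (hX : X ^ p ≤ ENNReal.ofReal y) :
    ENNReal.ofReal (y ^ (1 / p - 1)) * X ^ (p - 1) ≤ 1 := by
  have hp0 : p ≠ 0 := by positivity
  calc ENNReal.ofReal (y ^ (1 / p - 1)) * X ^ (p - 1)
      = ENNReal.ofReal (y ^ (1 / p - 1)) * (X ^ p) ^ ((p - 1) / p) := by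
        rw [← ENNReal.rpow_mul, mul_div_cancel₀ _ hp0]
    _ ≤ ENNReal.ofReal (y ^ (1 / p - 1)) * ENNReal.ofReal y ^ ((p - 1) / p) := by
        gcongr
    _ = 1 := by
        rw [ENNReal.ofReal_rpow_of_pos hy, ← ENNReal.ofReal_mul (by positivity),
          ← Real.rpow_add hy, show 1 / p - 1 + (p - 1) / p = 0 by field_simp; ring,
          Real.rpow_zero, ENNReal.ofReal_one]

/-- Regularized intermediate step in the proof of the Gronwall-Bellman-Opial inequality. -/
theorem stmt15 (p ε t : ℝ) (hp : 1 < p) (hε : 0 < ε) (ht : 0 ≤ t)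
    (x β : ℝ → ℝ≥0∞) (hx : Measurable x) (hβ : Measurable β)
    (h : ∀ s ∈ Set.Icc (0:ℝ) t,
      x s ^ p ≤ x 0 ^ p + ENNReal.ofReal p * ∫⁻ r in Set.Ioc (0:ℝ) s, x r ^ (p - 1) * β r ∧
        x 0 ^ p + ENNReal.ofReal p * ∫⁻ r in Set.Ioc (0:ℝ) s, x r ^ (p - 1) * β r < ⊤) :
    (ENNReal.ofReal ε + x 0 ^ p
        + ENNReal.ofReal p * ∫⁻ r in Set.Ioc (0:ℝ) t, x r ^ (p - 1) * β r) ^ (1 / p)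
      ≤ (ENNReal.ofReal ε + x 0 ^ p) ^ (1 / p) + ∫⁻ r in Set.Ioc (0:ℝ) t, β r := by
  have hp0 : 0 < p := by linarith
  have hx0 : x 0 ^ p ≠ ⊤ := ne_top_of_le_ne_top (h 0 ⟨le_rfl, ht⟩).2.ne le_self_add
  set c := ε + (x 0 ^ p).toReal
  have hc : ENNReal.ofReal ε + x 0 ^ p = ENNReal.ofReal c := by
    rw [ENNReal.ofReal_add hε.le ENNReal.toReal_nonneg, ENNReal.ofReal_toReal hx0]
  have hpush : ∀ s, ENNReal.ofReal p * ∫⁻ r in Ioc 0 s, x r ^ (p - 1) * β r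
      = ∫⁻ r in Ioc 0 s, ENNReal.ofReal p * (x r ^ (p - 1) * β r) := fun s =>
    (lintegral_const_mul' _ _ ENNReal.ofReal_ne_top).symm
  have hfin : ∀ s ∈ Icc 0 t, ∫⁻ r in Ioc 0 s, ENNReal.ofReal p * (x r ^ (p - 1) * β r) ≠ ⊤ :=
    fun s hs => ne_top_of_le_ne_top (h s hs).2.ne (hpush s ▸ le_add_self)
  rw [hc, hpush]
  refine (rpow_add_setLIntegral_Ioc_le ht (by positivity) (by positivity)
    (((hx.pow_const _).mul hβ).const_mul _).aemeasurable (hfin t ⟨ht, le_rfl⟩)).trans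
    (add_le_add le_rfl (setLIntegral_mono hβ fun s hs => ?_))
  have hs' : s ∈ Icc 0 t := Ioc_subset_Icc_self hs
  set Y := c + (∫⁻ r in Ioc 0 s, ENNReal.ofReal p * (x r ^ (p - 1) * β r)).toReal
  have hxY : x s ^ p ≤ ENNReal.ofReal Y := by
    rw [ENNReal.ofReal_add (by positivity) ENNReal.toReal_nonneg,
      ENNReal.ofReal_toReal (hfin s hs'), ← hc, ← hpush, add_assoc]
    exact (h s hs').1.trans le_add_self
  calc ENNReal.ofReal (1 / p * Y ^ (1 / p - 1)) * (ENNReal.ofReal p * (x s ^ (p - 1) * β s))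
      = ENNReal.ofReal (Y ^ (1 / p - 1)) * x s ^ (p - 1) * β s := by
        rw [← mul_assoc, ← ENNReal.ofReal_mul (by positivity),
          show 1 / p * Y ^ (1 / p - 1) * p = Y ^ (1 / p - 1) by field_simp, mul_assoc]
    _ ≤ β s := mul_le_of_le_one_left'
        (ENNReal.ofReal_rpow_inv_sub_one_mul_rpow_sub_one_le_one hp.le (by positivity) hxY)
end
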